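/- arXiv:1301.6424 — 3 statements merged into one kernel-verified Lean document; each statement's English description precedes it below -/
import Mathlib

section
/- Let n ≥ 1. If n ≡ 0 (mod 4) or n ≡ 1 (mod 4), then there exists a Skolem sequence of order n. -/
/-- A Skolem sequence of order `n`: a sequence `s` indexed by positions `1, …, 2n`
such that every entry lies in `{1, …, n}`, every `k ∈ {1, …, n}` appears at exactly
two positions, and any two positions `i < j` carrying the same value `k` satisfy
`j - i = k`. -/
def IsSkolemSeq (n : ℕ) (s : ℕ → ℕ) : Prop :=
  (∀ i ∈ Finset.Icc 1 (2 * n), 1 ≤ s i ∧ s i ≤ n) ∧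
  (∀ k ∈ Finset.Icc 1 n, ((Finset.Icc 1 (2 * n)).filter (fun i => s i = k)).card = 2) ∧
  (∀ i ∈ Finset.Icc 1 (2 * n), ∀ j ∈ Finset.Icc 1 (2 * n), i < j → s i = s j → j - i = s i)

/-- If positions `a k, a k + k` (for `k = 1, …, n`) are all distinct and lie in
`[1, 2n]`, then a Skolem sequence of order `n` exists. -/
lemma skolem_of_pairs (n : ℕ) (a : ℕ → ℕ)
    (h1 : ∀ k ∈ Finset.Icc 1 n, 1 ≤ a k ∧ a k + k ≤ 2 * n)
    (h2 : ∀ k ∈ Finset.Icc 1 n, ∀ k' ∈ Finset.Icc 1 n, k ≠ k' →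
      a k ≠ a k' ∧ a k ≠ a k' + k' ∧ a k + k ≠ a k' ∧ a k + k ≠ a k' + k') :
    ∃ s : ℕ → ℕ, IsSkolemSeq n s := by
  classical
  -- every position is an endpoint
  have hE : (Finset.Icc 1 n).biUnion (fun k => {a k, a k + k}) = Finset.Icc 1 (2 * n) := by
    apply Finset.eq_of_subset_of_card_le
    · intro i hi
      simp only [Finset.mem_biUnion, Finset.mem_insert, Finset.mem_singleton] at hi
      obtain ⟨k, hk, hik⟩ := hi
      obtain ⟨hk1, hk2⟩ := h1 k hk
      simp only [Finset.mem_Icc] at *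
      rcases hik with rfl | rfl <;> omega
    · rw [Finset.card_biUnion]
      · rw [Nat.card_Icc]
        have : ∀ k ∈ Finset.Icc 1 n, ({a k, a k + k} : Finset ℕ).card = 2 := by
          intro k hk
          rw [Finset.card_insert_of_notMem, Finset.card_singleton]
          simp only [Finset.mem_singleton]
          simp only [Finset.mem_Icc] at hk
          omega
        rw [Finset.sum_congr rfl this, Finset.sum_const, Nat.card_Icc]
        simp [Nat.mul_comm]
      · intro k hk k' hk' hne
        have h4 := h2 k hk k' hk' hne
        simp only [Finset.disjoint_left, Finset.mem_insert, Finset.mem_singleton]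
        rintro x (rfl | rfl) (h | h) <;> tauto
  have cover : ∀ i ∈ Finset.Icc 1 (2 * n), ∃ k, k ∈ Finset.Icc 1 n ∧ (i = a k ∨ i = a k + k) := by
    intro i hi
    rw [← hE] at hi
    simp only [Finset.mem_biUnion, Finset.mem_insert, Finset.mem_singleton] at hi
    obtain ⟨k, hk, hik⟩ := hi
    exact ⟨k, hk, hik⟩
  set s : ℕ → ℕ := fun i =>
    if h : ∃ k, k ∈ Finset.Icc 1 n ∧ (i = a k ∨ i = a k + k) then h.choose else 0 with hs
  have skey : ∀ k ∈ Finset.Icc 1 n, ∀ i, (i = a k ∨ i = a k + k) → s i = k := by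
    intro k hk i hik
    have hex : ∃ k, k ∈ Finset.Icc 1 n ∧ (i = a k ∨ i = a k + k) := ⟨k, hk, hik⟩
    rw [hs]
    simp only [dif_pos hex]
    obtain ⟨hk'mem, hik'⟩ := hex.choose_spec
    by_contra hne
    have h4 := h2 hex.choose hk'mem k hk hne
    rcases hik' with h' | h' <;> rcases hik with h'' | h'' <;> omega
  have smem : ∀ i ∈ Finset.Icc 1 (2 * n), ∃ k ∈ Finset.Icc 1 n, s i = k ∧ (i = a k ∨ i = a k + k) := by
    intro i hi
    obtain ⟨k, hk, hik⟩ := cover i hi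
    exact ⟨k, hk, skey k hk i hik, hik⟩
  refine ⟨s, ?_, ?_, ?_⟩
  · intro i hi
    obtain ⟨k, hk, hsk, _⟩ := smem i hi
    simp only [Finset.mem_Icc] at hk
    omega
  · intro k hk
    have hfilter : (Finset.Icc 1 (2 * n)).filter (fun i => s i = k) = {a k, a k + k} := by
      ext i
      simp only [Finset.mem_filter, Finset.mem_insert, Finset.mem_singleton]
      constructor
      · rintro ⟨hi, hsi⟩
        obtain ⟨k', hk', hsk', hik'⟩ := smem i hi
        rw [hsi] at hsk'
        rw [← hsk'] at hik'
        exact hik'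
      · intro hik
        obtain ⟨h1a, h1b⟩ := h1 k hk
        have hmem : i ∈ Finset.Icc 1 (2 * n) := by
          simp only [Finset.mem_Icc] at *
          rcases hik with rfl | rfl <;> omega
        exact ⟨hmem, skey k hk i hik⟩
    rw [hfilter, Finset.card_insert_of_notMem, Finset.card_singleton]
    simp only [Finset.mem_singleton, Finset.mem_Icc] at *
    omega
  · intro i hi j hj hij hsij
    obtain ⟨k, hk, hsk, hik⟩ := smem i hi
    obtain ⟨k', hk', hsk', hjk'⟩ := smem j hj
    have : k = k' := by rw [← hsk, ← hsk', hsij]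
    subst this
    rw [hsk]
    simp only [Finset.mem_Icc] at hk
    rcases hik with rfl | rfl <;> rcases hjk' with h | h <;> omega

/-- First-element function for the explicit Skolem pairing when `n = 4*m`, `m ≥ 2`. -/
def skolemA (m k : ℕ) : ℕ :=
  if k % 2 = 0 then 2*m+1 - k/2
  else if k = 4*m-1 then 2*m+1
  else if 2*m+1 ≤ k then 4*m+2 + (4*m-1-k)/2
  else if k = 2*m-1 then 4*m+2
  else if k = 1 then 7*m
  else 5*m+1 + (2*m-1-k)/2

/-- First-element function for the explicit Skolem pairing when `n = 4*m+1`, `m ≥ 2`. -/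
def skolemB (m k : ℕ) : ℕ :=
  if k % 2 = 0 then 2*m+1 - k/2
  else if k = 4*m+1 then 2*m+1
  else if 2*m+1 ≤ k then 4*m+1 + (4*m+1-k)/2
  else if k = 2*m-1 then 6*m+3
  else if k = 1 then 5*m+2
  else 5*m+3 + (2*m-1-k)/2


set_option maxHeartbeats 1000000 in
lemma skolemA_h1 (m : ℕ) (hm : 2 ≤ m) :
    ∀ k ∈ Finset.Icc 1 (4*m), 1 ≤ skolemA m k ∧ skolemA m k + k ≤ 2 * (4*m) := by
  intro k hk
  simp only [Finset.mem_Icc] at hk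
  unfold skolemA
  split_ifs <;> omega

set_option maxHeartbeats 1000000 in
lemma skolemA_h2 (m : ℕ) (hm : 2 ≤ m) :
    ∀ k ∈ Finset.Icc 1 (4*m), ∀ k' ∈ Finset.Icc 1 (4*m), k ≠ k' →
      skolemA m k ≠ skolemA m k' ∧ skolemA m k ≠ skolemA m k' + k' ∧
      skolemA m k + k ≠ skolemA m k' ∧ skolemA m k + k ≠ skolemA m k' + k' := by
  intro k hk k' hk' hne
  simp only [Finset.mem_Icc] at hk hk'
  unfold skolemA
  split_ifs <;> omega

set_option maxHeartbeats 1000000 in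
lemma skolemB_h1 (m : ℕ) (hm : 2 ≤ m) :
    ∀ k ∈ Finset.Icc 1 (4*m+1), 1 ≤ skolemB m k ∧ skolemB m k + k ≤ 2 * (4*m+1) := by
  intro k hk
  simp only [Finset.mem_Icc] at hk
  unfold skolemB
  split_ifs <;> omega

set_option maxHeartbeats 1000000 in
lemma skolemB_h2 (m : ℕ) (hm : 2 ≤ m) :
    ∀ k ∈ Finset.Icc 1 (4*m+1), ∀ k' ∈ Finset.Icc 1 (4*m+1), k ≠ k' →
      skolemB m k ≠ skolemB m k' ∧ skolemB m k ≠ skolemB m k' + k' ∧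
      skolemB m k + k ≠ skolemB m k' ∧ skolemB m k + k ≠ skolemB m k' + k' := by
  intro k hk k' hk' hne
  simp only [Finset.mem_Icc] at hk hk'
  unfold skolemB
  split_ifs <;> omega

/-- Base case `n = 4`. -/
def skolem4 (k : ℕ) : ℕ :=
  if k = 1 then 7 else if k = 2 then 2 else if k = 3 then 3 else 1

/-- Base case `n = 5`. -/
def skolem5 (k : ℕ) : ℕ :=
  if k = 1 then 8 else if k = 2 then 1 else if k = 3 then 4 else if k = 4 then 2 else 5

/-- If `n ≥ 1` and `n ≡ 0` or `1 (mod 4)`, then a Skolem sequence of order `n` exists. -/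
theorem skolem_sufficient_condition (n : ℕ) (hn : 1 ≤ n)
    (h : n % 4 = 0 ∨ n % 4 = 1) :
    ∃ s : ℕ → ℕ, IsSkolemSeq n s := by
  rcases h with h | h
  · obtain ⟨m, rfl⟩ : ∃ m, n = 4 * m := ⟨n / 4, by omega⟩
    have hm1 : 1 ≤ m := by omega
    rcases eq_or_lt_of_le hm1 with hm | hm
    · -- n = 4
      apply skolem_of_pairs _ skolem4
      · subst hm; decide
      · subst hm; decide
    · -- n = 4m, m ≥ 2
      exact skolem_of_pairs _ (skolemA m) (skolemA_h1 m hm) (skolemA_h2 m hm)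
  · obtain ⟨m, rfl⟩ : ∃ m, n = 4 * m + 1 := ⟨n / 4, by omega⟩
    rcases Nat.lt_or_ge m 2 with hm | hm
    · rcases Nat.lt_or_ge m 1 with hm0 | hm0
      · -- n = 1
        interval_cases m
        exact ⟨fun _ => 1, by decide, by decide, by decide⟩
      · -- n = 5
        have : m = 1 := by omega
        subst this
        apply skolem_of_pairs _ skolem5 <;> decide
    · -- n = 4m+1, m ≥ 2
      exact skolem_of_pairs _ (skolemB m) (skolemB_h1 m hm) (skolemB_h2 m hm)
end

section
/- Let n ≥ 1 and suppose {1,…,2n} is partitioned into n pairs (a_k, b_k), k = 1, …, n, with b_k − a_k = k for each k. Consider in ℤ/(6n+1)ℤ the base blocks B_k = {0, k, b_k + n} (elements reduced mod 6n+1) and all their translates B_k + x for x ∈ ℤ/(6n+1)ℤ. Then every block B_k + x has exactly 3 elements, and for every pair of distinct elements y, z ∈ ℤ/(6n+1)ℤ there is exactly one pair (k, x) with 1 ≤ k ≤ n and x ∈ ℤ/(6n+1)ℤ such that both y and z lie in B_k + x. In particular these blocks form a Steiner triple system on 6n+1 points. -/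
/-- A Skolem partition of order `n`: the `2n` numbers `a 1, b 1, …, a n, b n` are
pairwise distinct, together they are exactly `{1, …, 2n}`, and `b k - a k = k` for
every `k ∈ {1, …, n}`. -/
def IsSkolemPartition (n : ℕ) (a b : ℕ → ℕ) : Prop :=
  (∀ r ∈ Finset.Icc 1 n, ∀ t ∈ Finset.Icc 1 n,
      (a r = a t → r = t) ∧ (b r = b t → r = t) ∧ a r ≠ b t) ∧
  ((Finset.Icc 1 n).image a ∪ (Finset.Icc 1 n).image b = Finset.Icc 1 (2 * n)) ∧
  (∀ r ∈ Finset.Icc 1 n, b r - a r = r)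

/-- The base block `B_k = {0, k, b k + n}` in `ℤ/(6n+1)ℤ`. -/
def baseBlock (n : ℕ) (b : ℕ → ℕ) (k : ℕ) : Finset (ZMod (6 * n + 1)) :=
  {0, (k : ZMod (6 * n + 1)), ((b k + n : ℕ) : ZMod (6 * n + 1))}

section Aux

variable {n : ℕ} {a b : ℕ → ℕ}

lemma skolem_bounds (h : IsSkolemPartition n a b) {k : ℕ} (hk : k ∈ Finset.Icc 1 n) :
    b k = a k + k ∧ 1 ≤ a k ∧ a k ≤ 2 * n ∧ 1 ≤ b k ∧ b k ≤ 2 * n := by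
  obtain ⟨h1, h2, h3⟩ := h
  have hk' := Finset.mem_Icc.mp hk
  have ha : a k ∈ Finset.Icc 1 (2 * n) := by
    rw [← h2]; exact Finset.mem_union_left _ (Finset.mem_image_of_mem a hk)
  have hb : b k ∈ Finset.Icc 1 (2 * n) := by
    rw [← h2]; exact Finset.mem_union_right _ (Finset.mem_image_of_mem b hk)
  have := h3 k hk
  rw [Finset.mem_Icc] at ha hb
  omega

lemma diff_unique (h : IsSkolemPartition n a b) (d : ℕ) (hd1 : 1 ≤ d) (hd2 : d ≤ 3 * n) :
    ∃! p : ℕ × ℕ, p.1 ∈ Finset.Icc 1 n ∧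
      ((p.2 = 0 ∧ d = p.1) ∨ (p.2 = 1 ∧ d = a p.1 + n) ∨ (p.2 = 2 ∧ d = b p.1 + n)) := by
  by_cases hdn : d ≤ n
  · refine ⟨(d, 0), ⟨Finset.mem_Icc.mpr ⟨hd1, hdn⟩, Or.inl ⟨rfl, rfl⟩⟩, ?_⟩
    rintro ⟨k, j⟩ ⟨hk, hcase⟩
    dsimp only at hk hcase
    have hb := skolem_bounds h hk
    rcases hcase with ⟨hj, hd⟩ | ⟨hj, hd⟩ | ⟨hj, hd⟩ <;>
      simp only [Prod.mk.injEq] <;> omega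
  · push_neg at hdn
    have hmem : d - n ∈ (Finset.Icc 1 n).image a ∪ (Finset.Icc 1 n).image b := by
      rw [h.2.1, Finset.mem_Icc]; omega
    rw [Finset.mem_union, Finset.mem_image, Finset.mem_image] at hmem
    rcases hmem with ⟨k, hk, hak⟩ | ⟨k, hk, hbk⟩
    · refine ⟨(k, 1), ⟨hk, Or.inr (Or.inl ⟨rfl, show d = a k + n by omega⟩)⟩, ?_⟩
      rintro ⟨k', j'⟩ ⟨hk', hcase⟩
      dsimp only at hk' hcase
      have hb' := skolem_bounds h hk'
      have hkk' := Finset.mem_Icc.mp hk'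
      rcases hcase with ⟨hj, hd⟩ | ⟨hj, hd⟩ | ⟨hj, hd⟩
      · omega
      · have : a k' = a k := by omega
        have := (h.1 k' hk' k hk).1 this
        simp only [Prod.mk.injEq]; omega
      · exact absurd (by omega : a k = b k') (h.1 k hk k' hk').2.2
    · refine ⟨(k, 2), ⟨hk, Or.inr (Or.inr ⟨rfl, show d = b k + n by omega⟩)⟩, ?_⟩
      rintro ⟨k', j'⟩ ⟨hk', hcase⟩
      dsimp only at hk' hcase
      have hb' := skolem_bounds h hk'
      have hkk' := Finset.mem_Icc.mp hk'
      rcases hcase with ⟨hj, hd⟩ | ⟨hj, hd⟩ | ⟨hj, hd⟩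
      · omega
      · exact absurd (by omega : a k' = b k) (h.1 k' hk' k hk).2.2
      · have : b k' = b k := by omega
        have := (h.1 k' hk' k hk).2.1 this
        simp only [Prod.mk.injEq]; omega

lemma c0 (h : IsSkolemPartition n a b) (δ : ZMod (6 * n + 1))
    (h1 : 1 ≤ δ.val) (h2 : δ.val ≤ 3 * n) :
    ∃! q : ℕ × ZMod (6 * n + 1), q.1 ∈ Finset.Icc 1 n ∧
      q.2 ∈ baseBlock n b q.1 ∧ q.2 + δ ∈ baseBlock n b q.1 := by
  haveI : NeZero (6 * n + 1) := ⟨by omega⟩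
  have hδcast : ((δ.val : ℕ) : ZMod (6 * n + 1)) = δ := ZMod.natCast_zmod_val δ
  have hval : ∀ d : ℕ, d ≤ 3 * n → ((d : ZMod (6 * n + 1))).val = d := fun d hd =>
    ZMod.val_cast_of_lt (by omega)
  have hneg : ∀ d : ℕ, 1 ≤ d → d ≤ 3 * n → δ + (d : ZMod (6 * n + 1)) ≠ 0 := by
    intro d hd1 hd3 hc
    have hz : ((δ.val + d : ℕ) : ZMod (6 * n + 1)) = 0 := by
      push_cast; rw [hδcast]; exact hc
    have := Nat.le_of_dvd (by omega) ((ZMod.natCast_eq_zero_iff _ _).mp hz)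
    omega
  obtain ⟨⟨k, j⟩, ⟨hk, hcase⟩, huniq⟩ := diff_unique h δ.val h1 h2
  dsimp only at hk hcase
  have hbk := skolem_bounds h hk
  have hkn := Finset.mem_Icc.mp hk
  have hsum : ((b k + n : ℕ) : ZMod (6 * n + 1)) =
      (k : ZMod (6 * n + 1)) + ((a k + n : ℕ) : ZMod (6 * n + 1)) := by
    rw [← Nat.cast_add]; congr 1; omega
  refine ⟨(k, if j = 1 then (k : ZMod (6 * n + 1)) else 0), ⟨hk, ?_, ?_⟩, ?_⟩
  · by_cases hj : j = 1 <;> simp [hj, baseBlock]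
  · dsimp only
    rcases hcase with ⟨hj, hd⟩ | ⟨hj, hd⟩ | ⟨hj, hd⟩ <;> subst hj
    · rw [if_neg (by omega : ¬(0:ℕ) = 1), zero_add, ← hδcast, hd]; simp [baseBlock]
    · rw [if_pos rfl, ← hδcast, hd, ← hsum]; simp [baseBlock]
    · rw [if_neg (by omega : ¬(2:ℕ) = 1), zero_add, ← hδcast, hd]; simp [baseBlock]
  · rintro ⟨k', u'⟩ ⟨hk', hu', hv'⟩
    dsimp only at hk' hu' hv'
    have hbk' := skolem_bounds h hk'
    have hkn' := Finset.mem_Icc.mp hk'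
    have hsum' : ((b k' + n : ℕ) : ZMod (6 * n + 1)) =
        (k' : ZMod (6 * n + 1)) + ((a k' + n : ℕ) : ZMod (6 * n + 1)) := by
      rw [← Nat.cast_add]; congr 1; omega
    simp only [baseBlock, Finset.mem_insert, Finset.mem_singleton] at hu' hv'
    rcases hu' with rfl | rfl | rfl <;> rcases hv' with hv | hv | hv
    · rw [zero_add] at hv; rw [hv, ZMod.val_zero] at h1; omega
    · rw [zero_add] at hv
      have hdval : δ.val = k' := by rw [hv, hval k' (by omega)]
      have heq := huniq (k', 0) ⟨hk', Or.inl ⟨rfl, hdval⟩⟩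
      rw [Prod.mk.injEq] at heq
      obtain ⟨he1, he2⟩ := heq
      simp only [Prod.mk.injEq]
      exact ⟨he1, by rw [if_neg (show ¬ j = 1 by omega)]⟩
    · rw [zero_add] at hv
      have hdval : δ.val = b k' + n := by rw [hv, hval _ (by omega)]
      have heq := huniq (k', 2) ⟨hk', Or.inr (Or.inr ⟨rfl, hdval⟩)⟩
      rw [Prod.mk.injEq] at heq
      obtain ⟨he1, he2⟩ := heq
      simp only [Prod.mk.injEq]
      exact ⟨he1, by rw [if_neg (show ¬ j = 1 by omega)]⟩
    · exact absurd ((add_comm δ _).trans hv) (hneg k' (by omega) (by omega))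
    · rw [add_eq_left] at hv; rw [hv, ZMod.val_zero] at h1; omega
    · rw [hsum'] at hv
      have hδeq : δ = ((a k' + n : ℕ) : ZMod (6 * n + 1)) := add_left_cancel hv
      have hdval : δ.val = a k' + n := by rw [hδeq, hval _ (by omega)]
      have heq := huniq (k', 1) ⟨hk', Or.inr (Or.inl ⟨rfl, hdval⟩)⟩
      rw [Prod.mk.injEq] at heq
      obtain ⟨he1, he2⟩ := heq
      simp only [Prod.mk.injEq]
      exact ⟨he1, by rw [if_pos he2.symm, he1]⟩
    · exact absurd ((add_comm δ _).trans hv) (hneg (b k' + n) (by omega) (by omega))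
    · rw [hsum', add_assoc, add_eq_left] at hv
      exact absurd ((add_comm δ _).trans hv) (hneg (a k' + n) (by omega) (by omega))
    · rw [add_eq_left] at hv; rw [hv, ZMod.val_zero] at h1; omega

lemma cgen (h : IsSkolemPartition n a b) (δ : ZMod (6 * n + 1)) (hδ : δ ≠ 0) :
    ∃! q : ℕ × ZMod (6 * n + 1), q.1 ∈ Finset.Icc 1 n ∧
      q.2 ∈ baseBlock n b q.1 ∧ q.2 + δ ∈ baseBlock n b q.1 := by
  haveI : NeZero (6 * n + 1) := ⟨by omega⟩
  have hv1 : 1 ≤ δ.val := by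
    rcases Nat.eq_zero_or_pos δ.val with h0 | h0
    · exact absurd ((ZMod.val_eq_zero δ).mp h0) hδ
    · omega
  have hvlt : δ.val < 6 * n + 1 := ZMod.val_lt δ
  by_cases hle : δ.val ≤ 3 * n
  · exact c0 h δ hv1 hle
  · have hnegval : (-δ).val = 6 * n + 1 - δ.val := by
      rw [ZMod.neg_val, if_neg hδ]
    obtain ⟨⟨k, u⟩, ⟨hk, hu, hv⟩, huniq⟩ := c0 h (-δ) (by omega) (by omega)
    refine ⟨(k, u + -δ), ⟨hk, hv, by rwa [neg_add_cancel_right]⟩, ?_⟩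
    rintro ⟨k', w⟩ ⟨hk', hw, hw2⟩
    have := huniq (k', w + δ) ⟨hk', hw2, by rwa [add_neg_cancel_right]⟩
    rw [Prod.mk.injEq] at this
    simp only [Prod.mk.injEq]
    exact ⟨this.1, by rw [← this.2, add_neg_cancel_right]⟩

end Aux

/-- Given a Skolem partition of order `n ≥ 1`, every translate `B_k + x` of a base
block has exactly `3` elements, and every pair of distinct elements `y, z` of
`ℤ/(6n+1)ℤ` lies in exactly one translate `B_k + x` (with `1 ≤ k ≤ n` and
`x ∈ ℤ/(6n+1)ℤ`); hence the translates form a Steiner triple system on `6n + 1`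
points. -/
theorem skolemPartition_steiner_blocks (n : ℕ) (hn : 1 ≤ n) (a b : ℕ → ℕ)
    (h : IsSkolemPartition n a b) :
    (∀ k ∈ Finset.Icc 1 n, ∀ x : ZMod (6 * n + 1),
      ((baseBlock n b k).image (· + x)).card = 3) ∧
    (∀ y z : ZMod (6 * n + 1), y ≠ z →
      ∃! p : ℕ × ZMod (6 * n + 1), p.1 ∈ Finset.Icc 1 n ∧
        y ∈ (baseBlock n b p.1).image (· + p.2) ∧
        z ∈ (baseBlock n b p.1).image (· + p.2)) := by
  haveI : NeZero (6 * n + 1) := ⟨by omega⟩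
  have hval : ∀ d : ℕ, d ≤ 3 * n → ((d : ZMod (6 * n + 1))).val = d := fun d hd =>
    ZMod.val_cast_of_lt (by omega)
  constructor
  · intro k hk x
    have hbk := skolem_bounds h hk
    have hkn := Finset.mem_Icc.mp hk
    rw [Finset.card_image_of_injective _ (add_left_injective x)]
    have h0k : (0 : ZMod (6 * n + 1)) ≠ (k : ZMod (6 * n + 1)) := by
      intro hc
      have := congrArg ZMod.val hc
      rw [ZMod.val_zero, hval k (by omega)] at this; omega
    have h0c : (0 : ZMod (6 * n + 1)) ≠ ((b k + n : ℕ) : ZMod (6 * n + 1)) := by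
      intro hc
      have := congrArg ZMod.val hc
      rw [ZMod.val_zero, hval _ (by omega)] at this; omega
    have hkc : (k : ZMod (6 * n + 1)) ≠ ((b k + n : ℕ) : ZMod (6 * n + 1)) := by
      intro hc
      have := congrArg ZMod.val hc
      rw [hval k (by omega), hval _ (by omega)] at this; omega
    rw [show baseBlock n b k =
        insert (0 : ZMod (6 * n + 1)) (insert ((k : ZMod (6 * n + 1)))
          {((b k + n : ℕ) : ZMod (6 * n + 1))}) from rfl]
    rw [Finset.card_insert_of_notMem (by
        simp only [Finset.mem_insert, Finset.mem_singleton]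
        push_neg
        exact ⟨h0k, h0c⟩),
      Finset.card_insert_of_notMem (Finset.notMem_singleton.mpr hkc),
      Finset.card_singleton]
  · intro y z hyz
    obtain ⟨⟨k, u⟩, ⟨hk, hu, hv⟩, huniq⟩ := cgen h (z - y) (sub_ne_zero.mpr (Ne.symm hyz))
    refine ⟨(k, y - u), ⟨hk, ?_, ?_⟩, ?_⟩
    · exact Finset.mem_image.mpr ⟨u, hu, by ring⟩
    · exact Finset.mem_image.mpr ⟨u + (z - y), hv, by ring⟩
    · rintro ⟨k', x'⟩ ⟨hk', hy', hz'⟩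
      rw [Finset.mem_image] at hy' hz'
      obtain ⟨w, hw, hwx⟩ := hy'
      obtain ⟨w2, hw2, hw2x⟩ := hz'
      simp only at hwx hw2x
      have hww : w + (z - y) = w2 := by linear_combination hwx - hw2x
      have := huniq (k', w) ⟨hk', hw, by rw [hww]; exact hw2⟩
      rw [Prod.mk.injEq] at this
      simp only [Prod.mk.injEq]
      refine ⟨this.1, ?_⟩
      rw [← this.2]
      linear_combination hwx
end

section
/- Let n ≥ 1 with n ≡ 0 (mod 4) or n ≡ 1 (mod 4). Then there exists a Steiner triple system on 6n + 1 points, i.e. a collection B of 3-element subsets of a set V with |V| = 6n + 1 such that every 2-element subset of V is contained in exactly one member of B. -/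
set_option linter.unusedSectionVars false
namespace STS

def sig (n : ℕ) (m : ZMod (2*n)) : ZMod (2*n) :=
  if m.val % 2 = 0 then ((m.val / 2 : ℕ) : ZMod (2*n)) else ((n + m.val / 2 : ℕ) : ZMod (2*n))

def tau (n : ℕ) (k : ZMod (2*n)) : ZMod (2*n) :=
  if k.val < n then ((2 * k.val : ℕ) : ZMod (2*n)) else ((2 * (k.val - n) + 1 : ℕ) : ZMod (2*n))

variable (n : ℕ) [NeZero (2*n)]

theorem npos : 1 ≤ n := by
  have := NeZero.ne (2*n); omega

theorem sig_tau (k : ZMod (2*n)) : sig n (tau n k) = k := by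
  have hk : k.val < 2*n := ZMod.val_lt k
  unfold tau; split_ifs with h
  · have h2 : 2*k.val < 2*n := by omega
    have hval : ((2*k.val : ℕ) : ZMod (2*n)).val = 2*k.val := ZMod.val_cast_of_lt h2
    unfold sig
    rw [hval]
    rw [if_pos (by omega)]
    have : 2*k.val/2 = k.val := by omega
    rw [this, ZMod.natCast_rightInverse k]
  · have h2 : 2*(k.val - n)+1 < 2*n := by omega
    have hval : ((2*(k.val-n)+1 : ℕ) : ZMod (2*n)).val = 2*(k.val-n)+1 := ZMod.val_cast_of_lt h2
    unfold sig
    rw [hval]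
    have hodd : (2*(k.val-n)+1) % 2 = 1 := by omega
    rw [if_neg (by omega)]
    have : n + (2*(k.val-n)+1)/2 = k.val := by omega
    rw [this, ZMod.natCast_rightInverse k]

theorem tau_sig (m : ZMod (2*n)) : tau n (sig n m) = m := by
  have hm : m.val < 2*n := ZMod.val_lt m
  have hn := npos n
  unfold sig; split_ifs with h
  · have h2 : m.val / 2 < n := by omega
    have hval : ((m.val/2 : ℕ) : ZMod (2*n)).val = m.val/2 := ZMod.val_cast_of_lt (by omega)
    unfold tau
    rw [hval, if_pos h2]
    have : 2*(m.val/2) = m.val := by omega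
    rw [this, ZMod.natCast_rightInverse m]
  · have h2 : n + m.val / 2 < 2*n := by omega
    have hval : ((n + m.val/2 : ℕ) : ZMod (2*n)).val = n + m.val/2 := ZMod.val_cast_of_lt h2
    unfold tau
    rw [hval, if_neg (by omega)]
    have : 2*(n + m.val/2 - n)+1 = m.val := by omega
    rw [this, ZMod.natCast_rightInverse m]

theorem sig_bij : Function.Bijective (sig n) :=
  Function.bijective_iff_has_inverse.2 ⟨tau n, tau_sig n, sig_tau n⟩

/-- the quasigroup -/
def q (a b : ZMod (2*n)) : ZMod (2*n) := sig n (a + b)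

theorem q_comm (a b : ZMod (2*n)) : q n a b = q n b a := by unfold q; rw [add_comm]

theorem q_bij (a : ZMod (2*n)) : Function.Bijective (q n a) := by
  unfold q
  exact (sig_bij n).comp (Equiv.addLeft a).bijective

theorem q_diag_lt {a : ZMod (2*n)} (h : a.val < n) : q n a a = a := by
  have : (a+a).val = 2*a.val := by
    rw [ZMod.val_add, Nat.mod_eq_of_lt (by omega)]; ring_nf
  unfold q sig
  rw [this, if_pos (by omega)]
  have : 2*a.val/2 = a.val := by omega
  rw [this, ZMod.natCast_rightInverse a]

theorem q_diag_ge {a : ZMod (2*n)} (h : n ≤ a.val) : q n a a = ((a.val - n : ℕ) : ZMod (2*n)) := by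
  have ha : a.val < 2*n := ZMod.val_lt a
  have : (a+a).val = 2*a.val - 2*n := by
    rw [ZMod.val_add]
    have : (a.val + a.val) % (2*n) = a.val + a.val - 2*n := by
      rw [Nat.mod_eq_sub_mod (by omega), Nat.mod_eq_of_lt (by omega)]
    omega
  unfold q sig
  rw [this, if_pos (by omega)]
  congr 1
  omega

end STS

set_option linter.unusedSectionVars false
namespace STS

/-! ### ZMod 3 facts -/

theorem z3_cases : ∀ k : ZMod 3, k = 0 ∨ k = 1 ∨ k = 2 := by decide
theorem z3_ne1 : ∀ k : ZMod 3, k ≠ k + 1 := by decide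
theorem z3_ne2 : ∀ k : ZMod 3, k ≠ k + 2 := by decide

variable (n : ℕ) [NeZero (2*n)]

theorem val_add_n {b : ZMod (2*n)} (h : b.val < n) :
    (b + (n : ZMod (2*n))).val = b.val + n := by
  have hn2 : (n:ℕ) < 2*n := by have := npos n; omega
  rw [ZMod.val_add, ZMod.val_natCast, Nat.mod_eq_of_lt hn2, Nat.mod_eq_of_lt (by omega)]

theorem diag_iff {a b : ZMod (2*n)} :
    q n a a = b ↔ (a = b ∧ a.val < n) ∨ (a = b + (n : ZMod (2*n)) ∧ b.val < n) := by
  have ha : a.val < 2*n := ZMod.val_lt a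
  constructor
  · intro h
    by_cases hlt : a.val < n
    · rw [q_diag_lt n hlt] at h; exact Or.inl ⟨h, hlt⟩
    · rw [q_diag_ge n (by omega)] at h
      have hbv : b.val = a.val - n := by
        rw [← h, ZMod.val_cast_of_lt (by omega)]
      refine Or.inr ⟨?_, by omega⟩
      apply ZMod.val_injective
      rw [val_add_n n (by omega)]
      omega
  · rintro (⟨rfl, hlt⟩ | ⟨rfl, hlt⟩)
    · exact q_diag_lt n hlt
    · have hv := val_add_n n hlt
      rw [q_diag_ge n (by omega)]
      rw [hv]
      simp only [Nat.add_sub_cancel]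
      exact ZMod.natCast_rightInverse b

/-! ### The blocks -/

abbrev Pt := Option (ZMod (2*n) × ZMod 3)

def t1 (i : ZMod (2*n)) : Finset (Pt n) := {some (i,0), some (i,1), some (i,2)}
def t2 (i : ZMod (2*n)) (j : ZMod 3) : Finset (Pt n) :=
  {none, some (i + (n : ZMod (2*n)), j), some (i, j+1)}
def t3 (x y : ZMod (2*n)) (j : ZMod 3) : Finset (Pt n) :=
  {some (x,j), some (y,j), some (q n x y, j+1)}

def B : Finset (Finset (Pt n)) :=
  ((Finset.univ.filter (fun i : ZMod (2*n) => i.val < n)).image (t1 n)) ∪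
  (((Finset.univ.filter (fun i : ZMod (2*n) => i.val < n)) ×ˢ (Finset.univ : Finset (ZMod 3))).image
      (fun p => t2 n p.1 p.2)) ∪
  (((Finset.univ : Finset (ZMod (2*n) × ZMod (2*n) × ZMod 3)).filter (fun t => t.1 ≠ t.2.1)).image
      (fun t => t3 n t.1 t.2.1 t.2.2))

theorem mem_B {e : Finset (Pt n)} :
    e ∈ B n ↔ (∃ i, i.val < n ∧ e = t1 n i) ∨ (∃ i j, i.val < n ∧ e = t2 n i j) ∨
      (∃ x y j, x ≠ y ∧ e = t3 n x y j) := by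
  unfold B
  simp only [Finset.mem_union, Finset.mem_image, Finset.mem_filter, Finset.mem_product,
    Finset.mem_univ, true_and, and_true, Prod.exists]
  constructor
  · rintro ((⟨i, hi, rfl⟩ | ⟨i, j, hi, rfl⟩) | ⟨x, y, j, hxy, rfl⟩)
    · exact Or.inl ⟨i, hi, rfl⟩
    · exact Or.inr (Or.inl ⟨i, j, hi, rfl⟩)
    · exact Or.inr (Or.inr ⟨x, y, j, hxy, rfl⟩)
  · rintro (⟨i, hi, rfl⟩ | ⟨i, j, hi, rfl⟩ | ⟨x, y, j, hxy, rfl⟩)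
    · exact Or.inl (Or.inl ⟨i, hi, rfl⟩)
    · exact Or.inl (Or.inr ⟨i, j, hi, rfl⟩)
    · exact Or.inr ⟨x, y, j, hxy, rfl⟩

theorem mem_t1 {a : ZMod (2*n)} {k : ZMod 3} {i} : some (a,k) ∈ t1 n i ↔ a = i := by
  constructor
  · intro h; simp only [t1, Finset.mem_insert, Finset.mem_singleton, Option.some.injEq,
      Prod.mk.injEq] at h
    rcases h with ⟨h,-⟩|⟨h,-⟩|⟨h,-⟩ <;> exact h
  · rintro rfl
    rcases z3_cases k with rfl|rfl|rfl <;> simp [t1]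

theorem none_not_t1 {i} : none ∉ t1 n i := by simp [t1]
theorem none_not_t3 {x y j} : none ∉ t3 n x y j := by simp [t3]
theorem none_mem_t2 {i j} : none ∈ t2 n i j := by simp [t2]

theorem mem_t2 {a : ZMod (2*n)} {k : ZMod 3} {i j} :
    some (a,k) ∈ t2 n i j ↔ (a = i + (n : ZMod (2*n)) ∧ k = j) ∨ (a = i ∧ k = j + 1) := by
  simp [t2, Prod.ext_iff]

theorem mem_t3 {a : ZMod (2*n)} {k : ZMod 3} {x y j} :
    some (a,k) ∈ t3 n x y j ↔ (a = x ∧ k = j) ∨ (a = y ∧ k = j) ∨ (a = q n x y ∧ k = j+1) := by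
  simp [t3, Prod.ext_iff]

theorem card3 {α} [DecidableEq α] {x y z : α} (h1 : x ≠ y) (h2 : x ≠ z) (h3 : y ≠ z) :
    ({x,y,z} : Finset α).card = 3 := by
  rw [Finset.card_insert_of_notMem (by simp [h1, h2]),
    Finset.card_insert_of_notMem (by simp [h3]), Finset.card_singleton]

theorem card_t1 (i) : (t1 n i).card = 3 := by
  refine card3 ?_ ?_ ?_ <;> simp [Prod.ext_iff] <;> decide

theorem card_t2 (i j) : (t2 n i j).card = 3 := by
  refine card3 (by simp) (by simp) ?_
  simp only [ne_eq, Option.some.injEq, Prod.mk.injEq, not_and]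
  intro _; exact z3_ne1 j

theorem card_t3 {x y : ZMod (2*n)} (hxy : x ≠ y) (j) : (t3 n x y j).card = 3 := by
  refine card3 ?_ ?_ ?_ <;>
    simp only [ne_eq, Option.some.injEq, Prod.mk.injEq, not_and] <;> intro h
  · exact absurd h hxy
  · exact z3_ne1 j
  · exact z3_ne1 j

theorem t3_comm (x y : ZMod (2*n)) (j) : t3 n x y j = t3 n y x j := by
  unfold t3; rw [q_comm, Finset.insert_comm]

end STS

namespace STS

theorem z3_aux1 : ∀ k j : ZMod 3, ¬(k = j + 1 ∧ k + 1 = j) := by decide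
theorem z3_aux2 : ∀ k j : ZMod 3, ¬(k = j ∧ k + 1 = j) := by decide
theorem z3_aux3 : ∀ k j : ZMod 3, ¬(k = j + 1 ∧ k + 1 = j + 1) := by decide
theorem z3_aux4 : ∀ k j : ZMod 3, ¬(k = j ∧ k = j + 1) := by decide

variable (n : ℕ) [NeZero (2*n)]

theorem no_t3_diag {a b : ZMod (2*n)} {k : ZMod 3} {x y j} (hxy : x ≠ y)
    (hb : q n a a = b) (h1 : some (a,k) ∈ t3 n x y j) (h2 : some (b,k+1) ∈ t3 n x y j) :
    False := by
  rw [mem_t3] at h1 h2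
  rcases h1 with ⟨ha1,ha2⟩|⟨ha1,ha2⟩|⟨ha1,ha2⟩ <;>
    rcases h2 with ⟨hb1,hb2⟩|⟨hb1,hb2⟩|⟨hb1,hb2⟩
  · exact z3_aux2 k j ⟨ha2, hb2⟩
  · exact z3_aux2 k j ⟨ha2, hb2⟩
  · -- a = x, b = q x y
    apply hxy
    rw [← ha1]
    exact (q_bij n a).injective (hb.trans (by rw [hb1, ha1]))
  · exact z3_aux2 k j ⟨ha2, hb2⟩
  · exact z3_aux2 k j ⟨ha2, hb2⟩
  · -- a = y, b = q x y
    apply hxy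
    have : q n a a = q n a x := by rw [hb, hb1, ha1, q_comm]
    have hax : a = x := (q_bij n a).injective this
    rw [← hax]; exact ha1
  · exact z3_aux1 k j ⟨ha2, hb2⟩
  · exact z3_aux1 k j ⟨ha2, hb2⟩
  · -- k = j+1 and k+1 = j+1
    have hkj : k = j := by
      have := hb2; exact add_right_cancel this
    exact z3_aux4 k j ⟨hkj, ha2⟩

theorem coverInf (a : ZMod (2*n)) (k : ZMod 3) :
    ∃! e, e ∈ B n ∧ none ∈ e ∧ some (a,k) ∈ e := by
  have hnn := npos n
  by_cases h : a.val < n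
  · refine ⟨t2 n a (k-1), ⟨(mem_B n).2 (Or.inr (Or.inl ⟨a, k-1, h, rfl⟩)), none_mem_t2 n, ?_⟩, ?_⟩
    · rw [mem_t2]; exact Or.inr ⟨rfl, by ring⟩
    · rintro e ⟨heB, hnone, hak⟩
      rcases (mem_B n).1 heB with ⟨i, hi, rfl⟩ | ⟨i, j, hi, rfl⟩ | ⟨x, y, j, hxy, rfl⟩
      · exact absurd hnone (none_not_t1 n)
      · rcases (mem_t2 n).1 hak with ⟨ha1, ha2⟩ | ⟨ha1, ha2⟩
        · have hv := val_add_n n hi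
          rw [ha1] at h; omega
        · rw [ha1, ha2]; congr 1; ring
      · exact absurd hnone (none_not_t3 n)
  · have ha2n : a.val < 2*n := ZMod.val_lt a
    set i0 : ZMod (2*n) := ((a.val - n : ℕ) : ZMod (2*n)) with hi0def
    have hi0v : i0.val = a.val - n := ZMod.val_cast_of_lt (by omega)
    have hi0n : i0.val < n := by omega
    have hia : i0 + (n:ZMod (2*n)) = a := by
      apply ZMod.val_injective; rw [val_add_n n hi0n]; omega
    refine ⟨t2 n i0 k, ⟨(mem_B n).2 (Or.inr (Or.inl ⟨i0, k, hi0n, rfl⟩)), none_mem_t2 n, ?_⟩, ?_⟩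
    · rw [mem_t2]; exact Or.inl ⟨hia.symm, rfl⟩
    · rintro e ⟨heB, hnone, hak⟩
      rcases (mem_B n).1 heB with ⟨i, hi, rfl⟩ | ⟨i, j, hi, rfl⟩ | ⟨x, y, j, hxy, rfl⟩
      · exact absurd hnone (none_not_t1 n)
      · rcases (mem_t2 n).1 hak with ⟨ha1, ha2⟩ | ⟨ha1, ha2⟩
        · have hv := val_add_n n hi
          have hii : i = i0 := by
            apply ZMod.val_injective
            rw [hi0v]
            have : a.val = i.val + n := by rw [ha1]; exact hv
            omega
          rw [hii, ha2]
        · rw [ha1] at h; exact absurd hi h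
      · exact absurd hnone (none_not_t3 n)

theorem coverSame (a b : ZMod (2*n)) (hab : a ≠ b) (k : ZMod 3) :
    ∃! e, e ∈ B n ∧ some (a,k) ∈ e ∧ some (b,k) ∈ e := by
  refine ⟨t3 n a b k, ⟨(mem_B n).2 (Or.inr (Or.inr ⟨a, b, k, hab, rfl⟩)),
    (mem_t3 n).2 (Or.inl ⟨rfl, rfl⟩), (mem_t3 n).2 (Or.inr (Or.inl ⟨rfl, rfl⟩))⟩, ?_⟩
  rintro e ⟨heB, hak, hbk⟩
  rcases (mem_B n).1 heB with ⟨i, hi, rfl⟩ | ⟨i, j, hi, rfl⟩ | ⟨x, y, j, hxy, rfl⟩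
  · rw [mem_t1] at hak hbk
    exact absurd (hak.trans hbk.symm) hab
  · rw [mem_t2] at hak hbk
    rcases hak with ⟨ha1, ha2⟩ | ⟨ha1, ha2⟩ <;> rcases hbk with ⟨hb1, hb2⟩ | ⟨hb1, hb2⟩
    · exact absurd (ha1.trans hb1.symm) hab
    · exact absurd ⟨ha2, hb2⟩ (z3_aux4 k j)
    · exact absurd ⟨hb2, ha2⟩ (z3_aux4 k j)
    · exact absurd (ha1.trans hb1.symm) hab
  · rw [mem_t3] at hak hbk
    rcases hak with ⟨ha1, ha2⟩ | ⟨ha1, ha2⟩ | ⟨ha1, ha2⟩ <;>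
      rcases hbk with ⟨hb1, hb2⟩ | ⟨hb1, hb2⟩ | ⟨hb1, hb2⟩
    · exact absurd (ha1.trans hb1.symm) hab
    · rw [ha1, hb1, ha2]
    · exact absurd ⟨ha2, hb2⟩ (z3_aux4 k j)
    · rw [ha1, hb1, ha2]; exact t3_comm n x y j
    · exact absurd (ha1.trans hb1.symm) hab
    · exact absurd ⟨ha2, hb2⟩ (z3_aux4 k j)
    · exact absurd ⟨hb2, ha2⟩ (z3_aux4 k j)
    · exact absurd ⟨hb2, ha2⟩ (z3_aux4 k j)
    · exact absurd (ha1.trans hb1.symm) hab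

end STS

namespace STS

variable (n : ℕ) [NeZero (2*n)]

theorem coverCross (a b : ZMod (2*n)) (k : ZMod 3) :
    ∃! e, e ∈ B n ∧ some (a,k) ∈ e ∧ some (b,k+1) ∈ e := by
  have hnn := npos n
  by_cases hb : q n a a = b
  · rcases (diag_iff n).1 hb with ⟨hab, hlt⟩ | ⟨hab, hbv⟩
    · refine ⟨t1 n a, ⟨(mem_B n).2 (Or.inl ⟨a, hlt, rfl⟩), (mem_t1 n).2 rfl,
        (mem_t1 n).2 hab.symm⟩, ?_⟩
      rintro e ⟨heB, hak, hbk⟩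
      rcases (mem_B n).1 heB with ⟨i, hi, rfl⟩ | ⟨i, j, hi, rfl⟩ | ⟨x, y, j, hxy, rfl⟩
      · rw [mem_t1] at hak; rw [hak]
      · rw [mem_t2] at hak hbk
        rcases hak with ⟨ha1, ha2⟩ | ⟨ha1, ha2⟩ <;> rcases hbk with ⟨hb1, hb2⟩ | ⟨hb1, hb2⟩
        · exact absurd ⟨ha2, hb2⟩ (z3_aux2 k j)
        · have heq : i + (n:ZMod (2*n)) = i := by rw [← ha1, hab]; exact hb1
          have hv := val_add_n n hi
          rw [heq] at hv; omega
        · exact absurd ⟨ha2, hb2⟩ (z3_aux1 k j)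
        · exact absurd ⟨ha2, hb2⟩ (z3_aux3 k j)
      · exact (no_t3_diag n hxy hb hak hbk).elim
    · refine ⟨t2 n b k, ⟨(mem_B n).2 (Or.inr (Or.inl ⟨b, k, hbv, rfl⟩)),
        (mem_t2 n).2 (Or.inl ⟨hab, rfl⟩), (mem_t2 n).2 (Or.inr ⟨rfl, rfl⟩)⟩, ?_⟩
      rintro e ⟨heB, hak, hbk⟩
      rcases (mem_B n).1 heB with ⟨i, hi, rfl⟩ | ⟨i, j, hi, rfl⟩ | ⟨x, y, j, hxy, rfl⟩
      · rw [mem_t1] at hak hbk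
        have heq : b + (n:ZMod (2*n)) = b := by rw [← hab, hak]; exact hbk.symm
        have hv := val_add_n n hbv
        rw [heq] at hv; omega
      · rw [mem_t2] at hak hbk
        rcases hak with ⟨ha1, ha2⟩ | ⟨ha1, ha2⟩ <;> rcases hbk with ⟨hb1, hb2⟩ | ⟨hb1, hb2⟩
        · exact absurd ⟨ha2, hb2⟩ (z3_aux2 k j)
        · rw [hb1, ha2]
        · exact absurd ⟨ha2, hb2⟩ (z3_aux1 k j)
        · have heq : b + (n:ZMod (2*n)) = b := by rw [← hab, ha1]; exact hb1.symm
          have hv := val_add_n n hbv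
          rw [heq] at hv; omega
      · exact (no_t3_diag n hxy hb hak hbk).elim
  · obtain ⟨y0, hy0⟩ := (q_bij n a).surjective b
    have hay0 : a ≠ y0 := by rintro rfl; exact hb hy0
    refine ⟨t3 n a y0 k, ⟨(mem_B n).2 (Or.inr (Or.inr ⟨a, y0, k, hay0, rfl⟩)),
      (mem_t3 n).2 (Or.inl ⟨rfl, rfl⟩), (mem_t3 n).2 (Or.inr (Or.inr ⟨hy0.symm, rfl⟩))⟩, ?_⟩
    rintro e ⟨heB, hak, hbk⟩
    rcases (mem_B n).1 heB with ⟨i, hi, rfl⟩ | ⟨i, j, hi, rfl⟩ | ⟨x, y, j, hxy, rfl⟩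
    · rw [mem_t1] at hak hbk
      exact absurd ((diag_iff n).2 (Or.inl ⟨hak.trans hbk.symm, by rw [hak]; exact hi⟩)) hb
    · rw [mem_t2] at hak hbk
      rcases hak with ⟨ha1, ha2⟩ | ⟨ha1, ha2⟩ <;> rcases hbk with ⟨hb1, hb2⟩ | ⟨hb1, hb2⟩
      · exact absurd ⟨ha2, hb2⟩ (z3_aux2 k j)
      · exact absurd ((diag_iff n).2 (Or.inr ⟨by rw [hb1]; exact ha1,
          by rw [hb1]; exact hi⟩)) hb
      · exact absurd ⟨ha2, hb2⟩ (z3_aux1 k j)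
      · exact absurd ((diag_iff n).2 (Or.inl ⟨ha1.trans hb1.symm, by rw [ha1]; exact hi⟩)) hb
    · rw [mem_t3] at hak hbk
      rcases hak with ⟨ha1, ha2⟩ | ⟨ha1, ha2⟩ | ⟨ha1, ha2⟩ <;>
        rcases hbk with ⟨hb1, hb2⟩ | ⟨hb1, hb2⟩ | ⟨hb1, hb2⟩
      · exact absurd ⟨ha2, hb2⟩ (z3_aux2 k j)
      · exact absurd ⟨ha2, hb2⟩ (z3_aux2 k j)
      · have hyy : y = y0 := (q_bij n a).injective (by rw [hy0, ha1]; exact hb1.symm)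
        rw [← ha1, hyy, ha2]
      · exact absurd ⟨ha2, hb2⟩ (z3_aux2 k j)
      · exact absurd ⟨ha2, hb2⟩ (z3_aux2 k j)
      · have hxx : x = y0 := (q_bij n a).injective (by rw [hy0, q_comm, ha1]; exact hb1.symm)
        rw [hxx, ← ha1, ha2]
        exact t3_comm n y0 a j
      · exact absurd ⟨ha2, hb2⟩ (z3_aux1 k j)
      · exact absurd ⟨ha2, hb2⟩ (z3_aux1 k j)
      · exact absurd ⟨add_right_cancel hb2, ha2⟩ (z3_aux4 k j)

end STS

namespace STS

variable (n : ℕ) [NeZero (2*n)]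

theorem card_B {e : Finset (Pt n)} (he : e ∈ B n) : e.card = 3 := by
  rcases (mem_B n).1 he with ⟨i, hi, rfl⟩ | ⟨i, j, hi, rfl⟩ | ⟨x, y, j, hxy, rfl⟩
  exacts [card_t1 n i, card_t2 n i j, card_t3 n hxy j]

theorem master (u v : Pt n) (huv : u ≠ v) : ∃! e, e ∈ B n ∧ u ∈ e ∧ v ∈ e := by
  have symm : ∀ (u v : Pt n), (∃! e, e ∈ B n ∧ u ∈ e ∧ v ∈ e) →
      ∃! e, e ∈ B n ∧ v ∈ e ∧ u ∈ e := by
    rintro u v ⟨e, ⟨h1, h2, h3⟩, hu⟩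
    exact ⟨e, ⟨h1, h3, h2⟩, fun e' ⟨g1, g2, g3⟩ => hu e' ⟨g1, g3, g2⟩⟩
  match u, v with
  | none, none => exact absurd rfl huv
  | none, some (a,k) => exact coverInf n a k
  | some (a,k), none => exact symm _ _ (coverInf n a k)
  | some (a,k), some (b,k') =>
    by_cases hk : k = k'
    · subst hk
      exact coverSame n a b (fun h => huv (by rw [h])) k
    · rcases (by decide : ∀ k k' : ZMod 3, k ≠ k' → (k' = k + 1 ∨ k = k' + 1)) k k' hk with
        h | h
      · subst h; exact coverCross n a b k
      · subst h; exact symm _ _ (coverCross n b a k')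

theorem mem_image_equiv' {α β} [DecidableEq β] (e : α ≃ β) (f : Finset α) (x : β) :
    x ∈ f.image e ↔ e.symm x ∈ f := by
  rw [Finset.mem_image]
  constructor
  · rintro ⟨u, hu, rfl⟩; simpa using hu
  · intro h; exact ⟨e.symm x, h, by simp⟩

end STS




/-- If `n ≥ 1` and `n ≡ 0` or `1 (mod 4)`, then there is a Steiner triple system on
`6n + 1` points: a collection `B` of 3-element subsets of a set `V` of size `6n + 1`
such that every 2-element subset of `V` is contained in exactly one member of `B`. -/
theorem steiner_triple_system_exists (n : ℕ) (hn : 1 ≤ n)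
    (h : n % 4 = 0 ∨ n % 4 = 1) :
    ∃ B : Finset (Finset (Fin (6 * n + 1))),
      (∀ e ∈ B, e.card = 3) ∧
      ∀ p : Finset (Fin (6 * n + 1)), p.card = 2 → ∃! e, e ∈ B ∧ p ⊆ e := by
  haveI : NeZero (2*n) := ⟨by omega⟩
  have hcard : Fintype.card (STS.Pt n) = 6 * n + 1 := by
    show Fintype.card (Option _) = _
    rw [Fintype.card_option, Fintype.card_prod, ZMod.card, ZMod.card]
    omega
  let e : STS.Pt n ≃ Fin (6 * n + 1) := Fintype.equivFinOfCardEq hcard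
  have key : ∀ (f : Finset (STS.Pt n)) (x y : Fin (6 * n + 1)),
      ({x, y} : Finset (Fin (6 * n + 1))) ⊆ f.image e ↔ e.symm x ∈ f ∧ e.symm y ∈ f := by
    intro f x y
    rw [Finset.insert_subset_iff, Finset.singleton_subset_iff,
      STS.mem_image_equiv', STS.mem_image_equiv']
  refine ⟨(STS.B n).image (Finset.image e), ?_, ?_⟩
  · intro f hf
    obtain ⟨e₀, he₀, rfl⟩ := Finset.mem_image.1 hf
    rw [Finset.card_image_of_injective _ e.injective]
    exact STS.card_B n he₀
  · intro p hp
    obtain ⟨x, y, hxy, rfl⟩ := Finset.card_eq_two.1 hp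
    have huv : e.symm x ≠ e.symm y := fun hh => hxy (by simpa using congrArg e hh)
    obtain ⟨e₀, ⟨he₀B, hu, hv⟩, huniq⟩ := STS.master n _ _ huv
    refine ⟨e₀.image e, ⟨Finset.mem_image_of_mem _ he₀B, (key e₀ x y).2 ⟨hu, hv⟩⟩, ?_⟩
    rintro f ⟨hfB, hpf⟩
    obtain ⟨e₁, he₁B, rfl⟩ := Finset.mem_image.1 hfB
    rw [huniq e₁ ⟨he₁B, ((key e₁ x y).1 hpf).1, ((key e₁ x y).1 hpf).2⟩]
end
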